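/- Let S be a positive definite symmetric integral m×m matrix, let A, B be real m×n matrices, let Ω ∈ H_n and W ∈ ℂ^{(m,n)}. Then the series defining θ^{(S)}[A;B](Ω,W) converges absolutely, and for all integer m×n matrices ξ, η one has θ^{(S)}[A;B](Ω, W+ξΩ+η) = exp(−πi σ(S(ξΩᵗξ + 2Wᵗξ))) · exp(2πi σ(S(Aᵗη − Bᵗξ))) · θ^{(S)}[A;B](Ω,W). -/

import Mathlib

/-!
Write `P = N + A`, `Y = Im Ω` and `V = Im W`. The modulus of the `N`-th term is
`exp (-π (σ(S P Y ᵗP) + 2 σ(S V ᵗP)))`. Factoring `S = ᵗC C` and `Y = ᵗD D` with `C`, `D`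
invertible, `σ(S P Y ᵗP)` is the squared Frobenius norm of `C P ᵗD`, hence dominates a positive
multiple of `∑ P_ij²`. So each term is bounded by a product, over the entries, of one-variable
Gaussians `exp (-a (k + α)² + b |k + α|)`, and such products are summable.

Replacing `W` by `W + ξΩ + η` turns the `N`-th term into the `(N + ξ)`-th one times the two
exponential factors and `exp (2πi σ(S η ᵗN))`, which is `1` because `S` is integral; reindexing
the series by `N ↦ N + ξ` gives the functional equation.
-/

open Matrix

/-- The `N`-th term of the theta series `θ^{(S)}[A;B](Ω,W)` with characteristic `(A,B)`. -/
noncomputable def thetaTerm {m n : ℕ} (S : Matrix (Fin m) (Fin m) ℝ)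
    (A B : Matrix (Fin m) (Fin n) ℝ) (Ω : Matrix (Fin n) (Fin n) ℂ)
    (W : Matrix (Fin m) (Fin n) ℂ) (N : Matrix (Fin m) (Fin n) ℤ) : ℂ :=
  Complex.exp ((Real.pi : ℂ) * Complex.I * Matrix.trace (S.map Complex.ofReal *
    ((N.map (Int.cast : ℤ → ℂ) + A.map Complex.ofReal) * Ω *
        (N.map (Int.cast : ℤ → ℂ) + A.map Complex.ofReal)ᵀ +
      2 • ((W + B.map Complex.ofReal) * (N.map (Int.cast : ℤ → ℂ) + A.map Complex.ofReal)ᵀ))))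

/-- The theta series `θ^{(S)}[A;B](Ω,W)`. -/
noncomputable def thetaChar {m n : ℕ} (S : Matrix (Fin m) (Fin m) ℝ)
    (A B : Matrix (Fin m) (Fin n) ℝ) (Ω : Matrix (Fin n) (Fin n) ℂ)
    (W : Matrix (Fin m) (Fin n) ℂ) : ℂ :=
  ∑' N : Matrix (Fin m) (Fin n) ℤ, thetaTerm S A B Ω W N

namespace Matrix

lemma trace_mul_transpose_eq_sum {m n R : Type*} [Fintype m] [Fintype n]
    [NonUnitalNonAssocSemiring R] (X P : Matrix m n R) :
    trace (X * Pᵀ) = ∑ i, ∑ j, X i j * P i j := by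
  simp [trace, mul_apply]

lemma trace_mul_mul_mul_transpose_comm {m n R : Type*} [Fintype m] [Fintype n]
    [CommSemiring R] {S : Matrix m m R} (hS : S.IsSymm) {Ω : Matrix n n R} (hΩ : Ω.IsSymm)
    (X Y : Matrix m n R) : trace (S * (X * Ω * Yᵀ)) = trace (S * (Y * Ω * Xᵀ)) := by
  rw [← trace_transpose, transpose_mul, trace_mul_comm]
  simp only [transpose_mul, transpose_transpose, hS.eq, hΩ.eq, Matrix.mul_assoc]

lemma exists_trace_map_mul_eq_intCast {m n : Type*} [Fintype m] [Fintype n]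
    {S : Matrix m m ℝ} (hS : ∀ i j, ∃ z : ℤ, S i j = z) (X Y : Matrix m n ℤ) :
    ∃ z : ℤ, trace (S.map Complex.ofReal *
      (X.map (Int.cast : ℤ → ℂ) * (Y.map (Int.cast : ℤ → ℂ))ᵀ)) = z := by
  choose T hT using hS
  have hST : S.map Complex.ofReal = (of T).map Int.cast := by
    ext i j
    simp [hT i j]
  refine ⟨trace (of T * (X * Yᵀ)), ?_⟩
  change _ = Int.castRingHom ℂ _
  rw [AddMonoidHom.map_trace, Matrix.map_mul, Matrix.map_mul, transpose_map, hST]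
  rfl

lemma PosDef.exists_isUnit_det_eq_transpose_mul_self {n : Type*} [Fintype n] [DecidableEq n]
    {S : Matrix n n ℝ} (hS : S.PosDef) : ∃ C : Matrix n n ℝ, IsUnit C.det ∧ S = Cᵀ * C := by
  open scoped MatrixOrder Matrix.Norms.L2Operator in
  obtain ⟨C, hC, rfl⟩ :=
    CStarAlgebra.isStrictlyPositive_iff_eq_star_mul_self.mp hS.isStrictlyPositive
  exact ⟨C, (isUnit_iff_isUnit_det C).mp hC, by
    rw [star_eq_conjTranspose, conjTranspose_eq_transpose_of_trivial]⟩

section Frobenius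

attribute [local instance] Matrix.frobeniusNormedAddCommGroup

variable {m n : Type*} [Fintype m] [Fintype n]

lemma frobenius_norm_sq_eq_sum_sq (X : Matrix m n ℝ) : ‖X‖ ^ 2 = ∑ i, ∑ j, X i j ^ 2 := by
  rw [frobenius_norm_def, ← Real.sqrt_eq_rpow, Real.sq_sqrt (by positivity)]
  simp

lemma PosDef.exists_mul_sum_sq_le_trace [DecidableEq m] [DecidableEq n] {S : Matrix m m ℝ}
    {Y : Matrix n n ℝ} (hS : S.PosDef) (hY : Y.PosDef) :
    ∃ c > 0, ∀ P : Matrix m n ℝ, c * ∑ i, ∑ j, P i j ^ 2 ≤ trace (S * (P * Y * Pᵀ)) := by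
  obtain ⟨C, hC, rfl⟩ := hS.exists_isUnit_det_eq_transpose_mul_self
  obtain ⟨D, hD, rfl⟩ := hY.exists_isUnit_det_eq_transpose_mul_self
  set K := ‖C⁻¹‖ * ‖D⁻¹‖
  -- `K = 0` when `m` or `n` is empty, hence `1 + K ^ 2` rather than `K ^ 2`.
  refine ⟨1 / (1 + K ^ 2), by positivity, fun P => ?_⟩
  set X := C * P * Dᵀ with hX
  have htrace : trace (Cᵀ * C * (P * (Dᵀ * D) * Pᵀ)) = ‖X‖ ^ 2 := by
    rw [frobenius_norm_sq_eq_sum_sq, Matrix.mul_assoc, trace_mul_comm]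
    simp only [sq, ← trace_mul_transpose_eq_sum, X, transpose_mul, transpose_transpose,
      Matrix.mul_assoc]
  have hP : ‖P‖ ≤ K * ‖X‖ := calc
    ‖P‖ = ‖C⁻¹ * X * (D⁻¹)ᵀ‖ := by
      rw [hX, transpose_nonsing_inv, Matrix.mul_assoc, Matrix.mul_assoc,
        mul_nonsing_inv _ (by rwa [det_transpose]), Matrix.mul_one, ← Matrix.mul_assoc,
        nonsing_inv_mul _ hC, Matrix.one_mul]
    _ ≤ ‖C⁻¹‖ * ‖X‖ * ‖D⁻¹‖ := by
      grw [frobenius_norm_mul, frobenius_norm_mul, frobenius_norm_transpose]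
    _ = K * ‖X‖ := by ring
  have hsq := pow_le_pow_left₀ (norm_nonneg P) hP 2
  rw [htrace, ← frobenius_norm_sq_eq_sum_sq, one_div_mul_eq_div, div_le_iff₀ (by positivity)]
  nlinarith [sq_nonneg ‖X‖]

end Frobenius

end Matrix

lemma summable_pi_prod {ι κ : Type*} [Fintype ι] {f : ι → κ → ℝ} (hf₀ : ∀ i k, 0 ≤ f i k)
    (hf : ∀ i, Summable (f i)) : Summable fun x : ι → κ => ∏ i, f i (x i) := by
  classical
  refine summable_of_sum_le (c := ∏ i, ∑' k, f i k)
    (fun x => Finset.prod_nonneg fun i _ => hf₀ i (x i)) fun u => ?_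
  calc ∑ x ∈ u, ∏ i, f i (x i)
      ≤ ∑ x ∈ Fintype.piFinset fun i => u.image (· i), ∏ i, f i (x i) :=
        Finset.sum_le_sum_of_subset_of_nonneg
          (fun x hx => Fintype.mem_piFinset.mpr fun i => Finset.mem_image_of_mem _ hx)
          fun x _ _ => Finset.prod_nonneg fun i _ => hf₀ i (x i)
    _ = ∏ i, ∑ k ∈ u.image (· i), f i k := (Finset.prod_univ_sum _ _).symm
    _ ≤ ∏ i, ∑' k, f i k :=
        Finset.prod_le_prod (fun i _ => Finset.sum_nonneg fun k _ => hf₀ i k)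
          fun i _ => (hf i).sum_le_tsum _ fun k _ => hf₀ i k

lemma summable_exp_neg_mul_sq_add_mul_abs {a : ℝ} (ha : 0 < a) (b α : ℝ) :
    Summable fun k : ℤ => Real.exp (-a * (k + α) ^ 2 + b * |k + α|) := by
  refine ((summable_pow_mul_jacobiTheta₂_term_bound ((2 * a * |α| + |b|) / (2 * Real.pi))
    (T := a / Real.pi) (by positivity) 0).mul_left (Real.exp (|b| * |α|))).of_nonneg_of_le
    (fun _ => (Real.exp_pos _).le) fun k => ?_
  rw [pow_zero, one_mul, ← Real.exp_add, Real.exp_le_exp, Int.cast_abs]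
  have hsq : (k : ℝ) ^ 2 - 2 * (|(k : ℝ)| * |α|) ≤ (k + α) ^ 2 := by
    nlinarith [neg_abs_le ((k : ℝ) * α), abs_mul (k : ℝ) α, sq_nonneg α]
  have hlin : b * |k + α| ≤ |b| * |(k : ℝ)| + |b| * |α| := by
    rw [← mul_add]
    exact (mul_le_mul_of_nonneg_right (le_abs_self b) (abs_nonneg _)).trans
      (mul_le_mul_of_nonneg_left (abs_add_le _ _) (abs_nonneg b))
  have hπ : Real.pi ≠ 0 := Real.pi_ne_zero
  field_simp
  nlinarith [mul_le_mul_of_nonneg_left hsq ha.le]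

lemma norm_thetaTerm {m n : ℕ} (S : Matrix (Fin m) (Fin m) ℝ)
    (A B : Matrix (Fin m) (Fin n) ℝ) (Ω : Matrix (Fin n) (Fin n) ℂ)
    (W : Matrix (Fin m) (Fin n) ℂ) (N : Matrix (Fin m) (Fin n) ℤ) :
    ‖thetaTerm S A B Ω W N‖ = Real.exp (-Real.pi *
      (trace (S * ((N.map Int.cast + A) * (of fun i j => (Ω i j).im) * (N.map Int.cast + A)ᵀ)) +
        2 * trace (S * ((of fun i j => (W i j).im) * (N.map Int.cast + A)ᵀ)))) := by
  have hre (t : ℂ) : ((Real.pi : ℂ) * Complex.I * t).re = -Real.pi * t.im := by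
    simp [Complex.mul_re]
  have hcast : N.map (Int.cast : ℤ → ℂ) + A.map Complex.ofReal =
      (N.map (Int.cast : ℤ → ℝ) + A).map Complex.ofReal := by
    ext i j
    simp
  rw [thetaTerm, Complex.norm_exp, hre, hcast, two_mul]
  generalize N.map (Int.cast : ℤ → ℝ) + A = P
  congr 2
  simp only [trace, diag, mul_apply, Matrix.add_apply, map_apply, transpose_apply, of_apply,
    two_smul, Complex.im_sum, Complex.add_im, Complex.mul_im, Complex.ofReal_re,
    Complex.ofReal_im, mul_zero, zero_mul, add_zero, zero_add, mul_add,
    Finset.sum_add_distrib, Finset.mul_sum, Finset.sum_mul, mul_assoc]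

lemma summable_norm_thetaTerm {m n : ℕ} {S : Matrix (Fin m) (Fin m) ℝ} (hS : S.PosDef)
    (A B : Matrix (Fin m) (Fin n) ℝ) {Ω : Matrix (Fin n) (Fin n) ℂ}
    (hΩ : (of fun i j => (Ω i j).im).PosDef) (W : Matrix (Fin m) (Fin n) ℂ) :
    Summable fun N => ‖thetaTerm S A B Ω W N‖ := by
  obtain ⟨c, hc, hquad⟩ := hS.exists_mul_sum_sq_le_trace hΩ
  set Y : Matrix (Fin n) (Fin n) ℝ := of fun i j => (Ω i j).im
  set V : Matrix (Fin m) (Fin n) ℝ := of fun i j => (W i j).im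
  have hbound (P : Matrix (Fin m) (Fin n) ℝ) :
      -Real.pi * (trace (S * (P * Y * Pᵀ)) + 2 * trace (S * (V * Pᵀ))) ≤
        ∑ i, ∑ j, (-(Real.pi * c) * P i j ^ 2 + 2 * Real.pi * |(S * V) i j| * |P i j|) := by
    have hlin : -∑ i, ∑ j, |(S * V) i j| * |P i j| ≤ trace (S * (V * Pᵀ)) := by
      rw [← Matrix.mul_assoc, trace_mul_transpose_eq_sum, neg_le]
      refine (neg_le_abs _).trans ((Finset.abs_sum_le_sum_abs _ _).trans
        (Finset.sum_le_sum fun i _ => (Finset.abs_sum_le_sum_abs _ _).trans_eq ?_))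
      simp only [abs_mul]
    simp only [Finset.sum_add_distrib, ← Finset.mul_sum, mul_assoc]
    nlinarith [hquad P, Real.pi_pos]
  let φ (i : Fin m) (j : Fin n) (k : ℤ) : ℝ :=
    Real.exp (-(Real.pi * c) * (k + A i j) ^ 2 + 2 * Real.pi * |(S * V) i j| * |k + A i j|)
  have hφ₀ (i j k) : 0 ≤ φ i j k := (Real.exp_pos _).le
  have hrow (i) : Summable fun row : Fin n → ℤ => ∏ j, φ i j (row j) :=
    summable_pi_prod (hφ₀ i) fun j => summable_exp_neg_mul_sq_add_mul_abs (by positivity) _ _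
  have hrow₀ (i) (row : Fin n → ℤ) : 0 ≤ ∏ j, φ i j (row j) :=
    Finset.prod_nonneg fun j _ => hφ₀ i j (row j)
  refine (summable_pi_prod hrow₀ hrow).of_nonneg_of_le (fun _ => norm_nonneg _) fun N => ?_
  rw [norm_thetaTerm]
  refine (Real.exp_le_exp.mpr (hbound _)).trans_eq ?_
  simp [φ, Real.exp_sum]

noncomputable def thetaMultiplier {m n : ℕ} (S : Matrix (Fin m) (Fin m) ℝ)
    (A B : Matrix (Fin m) (Fin n) ℝ) (Ω : Matrix (Fin n) (Fin n) ℂ)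
    (W : Matrix (Fin m) (Fin n) ℂ) (ξ η : Matrix (Fin m) (Fin n) ℤ) : ℂ :=
  Complex.exp (-((Real.pi : ℂ) * Complex.I) * trace (S.map Complex.ofReal *
      (ξ.map (Int.cast : ℤ → ℂ) * Ω * (ξ.map (Int.cast : ℤ → ℂ))ᵀ +
        2 • (W * (ξ.map (Int.cast : ℤ → ℂ))ᵀ)))) *
    Complex.exp (2 * (Real.pi : ℂ) * Complex.I * trace (S.map Complex.ofReal *
      (A.map Complex.ofReal * (η.map (Int.cast : ℤ → ℂ))ᵀ -
        B.map Complex.ofReal * (ξ.map (Int.cast : ℤ → ℂ))ᵀ)))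

lemma thetaTerm_add_mul_add {m n : ℕ} {S : Matrix (Fin m) (Fin m) ℝ} (hSsymm : S.IsSymm)
    (hSint : ∀ i j, ∃ z : ℤ, S i j = z) (A B : Matrix (Fin m) (Fin n) ℝ)
    {Ω : Matrix (Fin n) (Fin n) ℂ} (hΩ : Ω.IsSymm) (W : Matrix (Fin m) (Fin n) ℂ)
    (ξ η N : Matrix (Fin m) (Fin n) ℤ) :
    thetaTerm S A B Ω (W + ξ.map (Int.cast : ℤ → ℂ) * Ω + η.map (Int.cast : ℤ → ℂ)) N =
      thetaMultiplier S A B Ω W ξ η * thetaTerm S A B Ω W (N + ξ) := by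
  obtain ⟨z, hz⟩ := exists_trace_map_mul_eq_intCast hSint η N
  have hS : (S.map Complex.ofReal).IsSymm := hSsymm.map _
  have e₁ := trace_mul_mul_mul_transpose_comm hS hΩ (N.map Int.cast) (ξ.map Int.cast)
  have e₂ := trace_mul_mul_mul_transpose_comm hS hΩ (A.map Complex.ofReal) (ξ.map Int.cast)
  have e₃ :=
    trace_mul_mul_mul_transpose_comm hS isSymm_one (η.map Int.cast) (A.map Complex.ofReal)
  rw [Matrix.mul_one, Matrix.mul_one] at e₃
  rw [thetaMultiplier, thetaTerm, thetaTerm, Matrix.map_add _ Int.cast_add, ← Complex.exp_add,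
    ← Complex.exp_add, Complex.exp_eq_exp_iff_exists_int]
  refine ⟨z, ?_⟩
  simp only [two_smul, Matrix.mul_add, Matrix.add_mul, transpose_add, Matrix.mul_sub, trace_add,
    trace_sub] at hz e₁ e₂ e₃ ⊢
  linear_combination (Real.pi * Complex.I) * (2 * e₃ - e₁ - e₂) + 2 * Real.pi * Complex.I * hz

lemma thetaChar_add_mul_add {m n : ℕ} {S : Matrix (Fin m) (Fin m) ℝ} (hSsymm : S.IsSymm)
    (hSint : ∀ i j, ∃ z : ℤ, S i j = z) (A B : Matrix (Fin m) (Fin n) ℝ)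
    {Ω : Matrix (Fin n) (Fin n) ℂ} (hΩ : Ω.IsSymm) (W : Matrix (Fin m) (Fin n) ℂ)
    (ξ η : Matrix (Fin m) (Fin n) ℤ) :
    thetaChar S A B Ω (W + ξ.map (Int.cast : ℤ → ℂ) * Ω + η.map (Int.cast : ℤ → ℂ)) =
      thetaMultiplier S A B Ω W ξ η * thetaChar S A B Ω W := by
  simp_rw [thetaChar, thetaTerm_add_mul_add hSsymm hSint A B hΩ W ξ η, tsum_mul_left]
  exact congrArg _ ((Equiv.addRight ξ).tsum_eq _)

theorem stmt1 {m n : ℕ} (S : Matrix (Fin m) (Fin m) ℝ) (hSpos : S.PosDef) (hSsymm : S.IsSymm)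
    (hSint : ∀ i j, ∃ z : ℤ, S i j = (z : ℝ))
    (A B : Matrix (Fin m) (Fin n) ℝ)
    (Ω : Matrix (Fin n) (Fin n) ℂ) (hΩsymm : Ω.IsSymm)
    (hΩim : (Matrix.of fun i j => (Ω i j).im).PosDef)
    (W : Matrix (Fin m) (Fin n) ℂ) :
    Summable (fun N : Matrix (Fin m) (Fin n) ℤ => ‖thetaTerm S A B Ω W N‖) ∧
    ∀ ξ η : Matrix (Fin m) (Fin n) ℤ,
      thetaChar S A B Ω (W + ξ.map (Int.cast : ℤ → ℂ) * Ω + η.map (Int.cast : ℤ → ℂ)) =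
        Complex.exp (-((Real.pi : ℂ) * Complex.I) * Matrix.trace (S.map Complex.ofReal *
            (ξ.map (Int.cast : ℤ → ℂ) * Ω * (ξ.map (Int.cast : ℤ → ℂ))ᵀ +
              2 • (W * (ξ.map (Int.cast : ℤ → ℂ))ᵀ)))) *
          Complex.exp (2 * (Real.pi : ℂ) * Complex.I * Matrix.trace (S.map Complex.ofReal *
            (A.map Complex.ofReal * (η.map (Int.cast : ℤ → ℂ))ᵀ -
              B.map Complex.ofReal * (ξ.map (Int.cast : ℤ → ℂ))ᵀ))) *
          thetaChar S A B Ω W :=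
  ⟨summable_norm_thetaTerm hSpos A B hΩim W, thetaChar_add_mul_add hSsymm hSint A B hΩsymm W⟩
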